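/- Let X and Y be Polish spaces, let ν and σ be Borel probability measures on X and Y respectively, and let c : X × Y → ℝ be a continuous and bounded cost function. Then there exists an optimal transport plan: a probability measure π₀ on X × Y with first marginal ν and second marginal σ such that ∫ c dπ₀ = inf_{π ∈ Π(ν,σ)} ∫ c dπ. -/

import Mathlib

/-!
The transport plans `Π(ν, σ)` form a compact set of probability measures for the topology of
weak convergence: they are tight, because their marginals are the fixed tight measures `ν` and
`σ` on Polish spaces, and closed, because taking marginals is weakly continuous; so Prokhorov's
theorem applies. For a bounded continuous cost, `π ↦ ∫ c dπ` is weakly continuous by definition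
of the topology, hence attains its infimum on this nonempty compact set.
-/

open MeasureTheory Set BoundedContinuousFunction TopologicalSpace

namespace MeasureTheory

lemma ProbabilityMeasure.isClosed_setOf_map_eq {Ω Ω' : Type*} [MeasurableSpace Ω]
    [TopologicalSpace Ω] [OpensMeasurableSpace Ω] [MeasurableSpace Ω'] [TopologicalSpace Ω']
    [HasOuterApproxClosed Ω'] [BorelSpace Ω'] {f : Ω → Ω'} (hf : Continuous f)
    (ν : ProbabilityMeasure Ω') :
    IsClosed {μ : ProbabilityMeasure Ω | (μ : Measure Ω).map f = ν} := by
  convert (isClosed_singleton (x := ν)).preimage (continuous_map hf) using 1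
  ext μ
  rw [mem_preimage, mem_singleton_iff, ← toMeasure_injective.eq_iff, toMeasure_map]
  rfl

variable {X Y : Type*} [MeasurableSpace X] [MeasurableSpace Y]

/-- The set `Π(ν, σ)` of transport plans, as probability measures with the weak topology. -/
def couplings (ν : Measure X) (σ : Measure Y) : Set (ProbabilityMeasure (X × Y)) :=
  {π | (π : Measure (X × Y)).fst = ν ∧ (π : Measure (X × Y)).snd = σ}

lemma couplings_nonempty (ν : Measure X) (σ : Measure Y) [IsProbabilityMeasure ν]
    [IsProbabilityMeasure σ] : (couplings ν σ).Nonempty :=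
  ⟨⟨ν.prod σ, inferInstance⟩, Measure.fst_prod, Measure.snd_prod⟩

variable [TopologicalSpace X] [TopologicalSpace Y]

lemma isClosed_couplings [OpensMeasurableSpace (X × Y)] [HasOuterApproxClosed X] [BorelSpace X]
    [HasOuterApproxClosed Y] [BorelSpace Y]
    (ν : Measure X) (σ : Measure Y) [IsProbabilityMeasure ν] [IsProbabilityMeasure σ] :
    IsClosed (couplings ν σ) :=
  (ProbabilityMeasure.isClosed_setOf_map_eq continuous_fst ⟨ν, ‹_›⟩).inter
    (ProbabilityMeasure.isClosed_setOf_map_eq continuous_snd ⟨σ, ‹_›⟩)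

lemma isTightMeasureSet_couplings [IsCompletelyPseudoMetrizableSpace X]
    [SecondCountableTopology X] [BorelSpace X] [IsCompletelyPseudoMetrizableSpace Y]
    [SecondCountableTopology Y] [BorelSpace Y]
    (ν : Measure X) (σ : Measure Y) [IsFiniteMeasure ν] [IsFiniteMeasure σ] :
    IsTightMeasureSet
      {((π : ProbabilityMeasure (X × Y)) : Measure (X × Y)) | π ∈ couplings ν σ} := by
  refine .prodMk ((isTightMeasureSet_singleton (μ := ν)).subset ?_)
    ((isTightMeasureSet_singleton (μ := σ)).subset ?_)
  · rintro _ ⟨_, ⟨π, hπ, rfl⟩, rfl⟩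
    exact hπ.1
  · rintro _ ⟨_, ⟨π, hπ, rfl⟩, rfl⟩
    exact hπ.2

lemma isCompact_couplings [PolishSpace X] [BorelSpace X] [PolishSpace Y] [BorelSpace Y]
    (ν : Measure X) (σ : Measure Y) [IsProbabilityMeasure ν] [IsProbabilityMeasure σ] :
    IsCompact (couplings ν σ) :=
  (isClosed_couplings ν σ).closure_eq ▸
    isCompact_closure_of_isTightMeasureSet (isTightMeasureSet_couplings ν σ)

theorem exists_isMinOn_integral_couplings [PolishSpace X] [BorelSpace X] [PolishSpace Y]
    [BorelSpace Y] (ν : Measure X) (σ : Measure Y) [IsProbabilityMeasure ν]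
    [IsProbabilityMeasure σ] (c : X × Y →ᵇ ℝ) :
    ∃ π₀ ∈ couplings ν σ, IsMinOn (fun π : ProbabilityMeasure (X × Y) ↦ ∫ q, c q ∂π)
      (couplings ν σ) π₀ :=
  (isCompact_couplings ν σ).exists_isMinOn (couplings_nonempty ν σ)
    (ProbabilityMeasure.continuous_integral_boundedContinuousFunction c).continuousOn

end MeasureTheory

/-- Existence of an optimal transport plan: for Borel probability measures `ν, σ` on
Polish spaces `X, Y` and a continuous bounded cost `c : X × Y → ℝ`, there exists
`π₀ ∈ Π(ν,σ)` minimizing `∫ c dπ` over all `π ∈ Π(ν,σ)`. -/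
theorem stmt_6 {X Y : Type*}
    [TopologicalSpace X] [PolishSpace X] [MeasurableSpace X] [BorelSpace X]
    [TopologicalSpace Y] [PolishSpace Y] [MeasurableSpace Y] [BorelSpace Y]
    (ν : Measure X) (σ : Measure Y)
    [IsProbabilityMeasure ν] [IsProbabilityMeasure σ]
    (c : X × Y → ℝ) (hc : Continuous c) (M : ℝ) (hM : ∀ q, |c q| ≤ M) :
    ∃ π₀ : Measure (X × Y), IsProbabilityMeasure π₀ ∧ π₀.fst = ν ∧ π₀.snd = σ ∧
      ∀ π : Measure (X × Y), IsProbabilityMeasure π → π.fst = ν → π.snd = σ →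
        (∫ q, c q ∂π₀) ≤ ∫ q, c q ∂π := by
  obtain ⟨π₀, ⟨hπ₀fst, hπ₀snd⟩, hmin⟩ :=
    exists_isMinOn_integral_couplings ν σ (.ofNormedAddCommGroup c hc M hM)
  exact ⟨π₀, inferInstance, hπ₀fst, hπ₀snd, fun π hπ hfst hsnd ↦
    isMinOn_iff.1 hmin ⟨π, hπ⟩ ⟨hfst, hsnd⟩⟩
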